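/- For any connected graph G on n vertices with maximum degree Δ ≥ 2, the maximum number of full degree vertices in a spanning tree of G is at least n/(Δ(Δ-1)+1). -/

import Mathlib

open SimpleGraph

/-- Degree of `v` in `T` (as `Set.ncard` of the neighbor set). -/
noncomputable def deg {V : Type*} (T : SimpleGraph V) (v : V) : ℕ :=
  (T.neighborSet v).ncard

/-- `T` is a spanning tree of `G`. -/
def IsSpanningTree {V : Type*} (G T : SimpleGraph V) : Prop :=
  T ≤ G ∧ T.IsTree

/-- Number of full degree vertices of the spanning tree `T` of `G`. -/
noncomputable def fullDegCount {V : Type*} (G T : SimpleGraph V) : ℕ :=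
  {v : V | deg T v = deg G v}.ncard

/-- Number of leaves of `T`. -/
noncomputable def leafCount {V : Type*} (T : SimpleGraph V) : ℕ :=
  {v : V | deg T v = 1}.ncard

/-- `φ(G)`: maximum number of full degree vertices over all spanning trees. -/
noncomputable def phi {V : Type*} (G : SimpleGraph V) : ℕ :=
  sSup {k | ∃ T : SimpleGraph V, IsSpanningTree G T ∧ fullDegCount G T = k}

/-- `λ(G)`: maximum number of leaves over all spanning trees. -/
noncomputable def lam {V : Type*} (G : SimpleGraph V) : ℕ :=
  sSup {k | ∃ T : SimpleGraph V, IsSpanningTree G T ∧ leafCount T = k}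

/-- `S` is a connected dominating set of `G`. -/
def IsConnDomSet {V : Type*} (G : SimpleGraph V) (S : Set V) : Prop :=
  (G.induce S).Connected ∧ ∀ v : V, v ∈ S ∨ ∃ u ∈ S, G.Adj u v

/-- `γ_C(G)`: minimum size of a connected dominating set. -/
noncomputable def gammaC {V : Type*} (G : SimpleGraph V) : ℕ :=
  sInf {k | ∃ S : Set V, IsConnDomSet G S ∧ S.ncard = k}

/-- Closed neighborhood of `v` in `G`. -/
def closedNbhd {V : Type*} (G : SimpleGraph V) (v : V) : Set V :=
  insert v (G.neighborSet v)

/-- The square of a graph: join vertices at distance at most 2. -/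
def square {V : Type*} (G : SimpleGraph V) : SimpleGraph V where
  Adj u v := u ≠ v ∧ G.Reachable u v ∧ G.dist u v ≤ 2
  symm := by
    refine ⟨?_⟩
    rintro u v ⟨h1, h2, h3⟩
    exact ⟨h1.symm, h2.symm, by rwa [SimpleGraph.dist_comm]⟩
  loopless := by refine ⟨?_⟩; rintro v ⟨h, -⟩; exact h rfl

/-!
Take a maximal set `S` of vertices with pairwise disjoint open neighbourhoods. The stars of `G`
centred at `S` form a forest, which extends to a spanning tree in which every centre keeps all
its edges. By maximality every vertex is within distance two of `S`, and a ball of radius two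
has at most `Δ(Δ-1)+1` vertices, so `n ≤ |S| (Δ(Δ-1)+1)`.
-/

namespace SimpleGraph

open Finset

variable {V : Type*} {G : SimpleGraph V}

theorem deg_eq_degree (G : SimpleGraph V) (v : V) [Fintype (G.neighborSet v)] :
    deg G v = G.degree v := by
  rw [deg, Set.ncard_eq_toFinset_card', ← neighborFinset_def, card_neighborFinset_eq_degree]

theorem exists_adj_adj_of_maximal_pairwiseDisjoint_neighborSet {S : Finset V}
    (hS : Maximal (fun S : Finset V => (S : Set V).PairwiseDisjoint G.neighborSet) S) {v : V}
    (hv : v ∉ S) : ∃ s ∈ S, ∃ u, G.Adj s u ∧ G.Adj u v := by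
  classical
  by_contra! hfar
  have hpack : ((insert v S : Finset V) : Set V).PairwiseDisjoint G.neighborSet := by
    rw [coe_insert]
    exact hS.prop.insert fun s hs _ =>
      Set.disjoint_left.2 fun u hvu hsu => hfar s hs u hsu hvu.symm
  exact hv (hS.2 hpack (subset_insert v S) (mem_insert_self v S))

def starUnion (G : SimpleGraph V) (S : Set V) : SimpleGraph V where
  Adj u v := G.Adj u v ∧ (u ∈ S ∨ v ∈ S)
  symm := ⟨fun _ _ h => ⟨h.1.symm, h.2.symm⟩⟩
  loopless := ⟨fun v h => G.loopless.irrefl v h.1⟩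

theorem starUnion_le (G : SimpleGraph V) (S : Set V) : G.starUnion S ≤ G :=
  fun _ _ h => h.1

theorem neighborSet_starUnion_of_mem {S : Set V} {s : V} (hs : s ∈ S) :
    (G.starUnion S).neighborSet s = G.neighborSet s :=
  Set.ext fun _ => ⟨And.left, fun h => ⟨h, Or.inl hs⟩⟩

theorem isAcyclic_starUnion {S : Set V} (hS : S.PairwiseDisjoint G.neighborSet) :
    (G.starUnion S).IsAcyclic := by
  -- The two neighbours of a vertex along a cycle cannot both be centres, since they share it
  -- as a neighbour; but a vertex outside `S` has only centres as neighbours.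
  have centres : ∀ {v} {c : (G.starUnion S).Walk v v}, c.IsCycle → c.snd ∈ S →
      c.penultimate ∈ S → False := fun {_} c hc hsnd hpen =>
    Set.disjoint_left.1 (hS hsnd hpen hc.snd_ne_penultimate) (c.adj_snd hc.not_nil).1.symm
      (c.adj_penultimate hc.not_nil).1
  classical
  intro v c hc
  by_cases hsupp : ∀ w ∈ c.support, w ∈ S
  · exact centres hc (hsupp _ (c.getVert_mem_support 1)) (hsupp _ (c.getVert_mem_support _))
  · push Not at hsupp
    obtain ⟨a, ha, haS⟩ := hsupp
    have hc' := hc.rotate ha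
    exact centres hc' (((c.rotate a ha).adj_snd hc'.not_nil).2.resolve_left haS)
      (((c.rotate a ha).adj_penultimate hc'.not_nil).2.resolve_right haS)

theorem card_le_fullDegCount [Finite V] {S : Finset V} {T : SimpleGraph V}
    (hST : G.starUnion S ≤ T) (hTG : T ≤ G) : #S ≤ fullDegCount G T := by
  rw [fullDegCount, ← Set.ncard_coe_finset]
  refine Set.ncard_le_ncard (fun s hs => ?_) (Set.toFinite _)
  have hT : T.neighborSet s = G.neighborSet s :=
    le_antisymm (neighborSet_mono hTG s)
      ((neighborSet_starUnion_of_mem hs).symm.le.trans (neighborSet_mono hST s))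
  rw [Set.mem_ofPred, deg, deg, hT]

theorem fullDegCount_le_phi [Finite V] {T : SimpleGraph V} (hT : IsSpanningTree G T) :
    fullDegCount G T ≤ phi G :=
  le_csSup ⟨Nat.card V, by rintro _ ⟨T', -, rfl⟩; exact Set.ncard_le_card _⟩ ⟨T, hT, rfl⟩

section Counting

variable [Fintype V] [DecidableEq V] [DecidableRel G.Adj] {Δ : ℕ}

theorem card_biUnion_neighborFinset_erase_le (hΔ : ∀ v, G.degree v ≤ Δ) (s : V) :
    #((G.neighborFinset s).biUnion fun u => (G.neighborFinset u).erase s) ≤ Δ * (Δ - 1) :=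
  calc _ ≤ #(G.neighborFinset s) * (Δ - 1) := by
        refine card_biUnion_le_card_mul _ _ _ fun u hu => ?_
        rw [card_erase_of_mem (by simpa [adj_comm] using hu), card_neighborFinset_eq_degree]
        exact Nat.sub_le_sub_right (hΔ u) 1
    _ ≤ Δ * (Δ - 1) :=
        Nat.mul_le_mul_right _ ((card_neighborFinset_eq_degree G s).trans_le (hΔ s))

theorem card_le_card_mul_of_forall_adj_adj (hΔ : ∀ v, G.degree v ≤ Δ) (S : Finset V)
    (hS : ∀ v ∉ S, ∃ s ∈ S, ∃ u, G.Adj s u ∧ G.Adj u v) :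
    Fintype.card V ≤ #S * (Δ * (Δ - 1) + 1) := by
  let ball s := insert s ((G.neighborFinset s).biUnion fun u => (G.neighborFinset u).erase s)
  have hcover : univ ⊆ S.biUnion ball := by
    intro v _
    by_cases hv : v ∈ S
    · exact mem_biUnion.2 ⟨v, hv, mem_insert_self _ _⟩
    · obtain ⟨s, hs, u, hsu, huv⟩ := hS v hv
      refine mem_biUnion.2 ⟨s, hs, mem_insert_of_mem (mem_biUnion.2 ⟨u, ?_, ?_⟩)⟩
      · simpa using hsu
      · simpa [huv] using fun h : v = s => hv (h ▸ hs)
  calc Fintype.card V = #(univ : Finset V) := card_univ.symm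
    _ ≤ #(S.biUnion ball) := card_le_card hcover
    _ ≤ #S * (Δ * (Δ - 1) + 1) := card_biUnion_le_card_mul _ _ _ fun s _ =>
        (card_insert_le _ _).trans (Nat.succ_le_succ
          (card_biUnion_neighborFinset_erase_le hΔ s))

end Counting

end SimpleGraph

open SimpleGraph in
theorem stmt0_general {V : Type*} [Fintype V] (G : SimpleGraph V) (n Δ : ℕ)
    (hn : n = Fintype.card V) (hG : G.Connected)
    (hΔ : ∀ v : V, deg G v ≤ Δ) :
    (n : ℝ) / (Δ * (Δ - 1) + 1) ≤ (phi G : ℝ) := by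
  classical
  obtain ⟨S, -, hS⟩ := Finite.exists_le_maximal
    (p := fun S : Finset V => (S : Set V).PairwiseDisjoint G.neighborSet) (a := ∅) (by simp)
  obtain ⟨T, hST, hTG, hT⟩ :=
    hG.exists_isTree_le_of_le_of_isAcyclic (starUnion_le G S) (isAcyclic_starUnion hS.prop)
  have hball := card_le_card_mul_of_forall_adj_adj (fun v => deg_eq_degree G v ▸ hΔ v) S
    fun _ hv => exists_adj_adj_of_maximal_pairwiseDisjoint_neighborSet hS hv
  have hfull := (card_le_fullDegCount hST hTG).trans (fullDegCount_le_phi ⟨hTG, hT⟩)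
  have hcount : n ≤ phi G * (Δ * (Δ - 1) + 1) :=
    hn ▸ hball.trans (Nat.mul_le_mul_right _ hfull)
  -- the truncation of `Δ - 1` in `ℕ` only matters at `Δ = 0`, where it is multiplied by `0`
  have hcast : ((Δ * (Δ - 1) + 1 : ℕ) : ℝ) = Δ * (Δ - 1) + 1 := by
    cases Δ <;> push_cast <;> ring
  rw [← hcast, div_le_iff₀ (by positivity)]
  exact_mod_cast hcount

theorem stmt0 {V : Type*} [Fintype V] (G : SimpleGraph V) (n Δ : ℕ)
    (hn : n = Fintype.card V) (hG : G.Connected) (hΔ2 : 2 ≤ Δ)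
    (hΔ : ∀ v : V, deg G v ≤ Δ) :
    (n : ℝ) / (Δ * (Δ - 1) + 1) ≤ (phi G : ℝ) :=
  stmt0_general G n Δ hn hG hΔ
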